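/- Let u₀, f and ũ₀, f̃ be two pairs of data as in the context, with Hölder constants L_{u₀}, L_f and L_{ũ₀}, L_{f̃} respectively, and let U^j and Ũ^j be the corresponding extended scheme solutions. Assume the CFL condition τ (p−1) M (max(L_{u₀}, L_{ũ₀}) + T·max(L_f, L_{f̃}))^{p−2} ≤ r^{2+(1−a)(p−2)}. Then for every j = 0, …, N, sup_{x∈ℝ^d} |U^j(x) − Ũ^j(x)| ≤ ‖u₀ − ũ₀‖_{L^∞(ℝ^d)} + t_j ‖f − f̃‖_{L^∞(ℝ^d)}. -/

import Mathlib

/-!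
For `p ≥ 2`, `J_p` is nondecreasing with `0 ≤ J_p' ≤ (p - 1) C ^ (p - 2)` on `[-C, C]`. So if the
stencil increments `ψ(x + y_β) - ψ(x)` of two functions are bounded by `K`, the difference of their
discrete `p`-Laplacians is a linear difference operator with weights `0 ≤ c_β ω_β ≤
(p - 1) K ^ (p - 2) ω_β` (the slopes `c_β` of `J_p`). When `τ (p - 1) K ^ (p - 2) ∑ ω ≤ 1`, one step
of the explicit scheme therefore writes the new difference as a convex combination of old
differences plus `τ (f - f̃)`, which gives the sup-norm estimate step by step.

The increment bound is kept along the iteration by applying the same estimate to a solution and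
its own translate by `z`: the `a`-Hölder constant grows by at most `τ L_f` per step, so up to
time `T` all stencil increments are at most `K = L r ^ a`, where
`L = max L_{u₀} L_{ũ₀} + T max L_f L_{f̃}`. Since `∑ ω ≤ M r ^ (-p)`, the CFL condition implies
`τ (p - 1) K ^ (p - 2) ∑ ω ≤ 1`.
-/

open scoped BigOperators

/-- `J_p(ξ) = |ξ|^{p-2} ξ`. -/
noncomputable def Jp (p ξ : ℝ) : ℝ := |ξ| ^ (p - 2) * ξ

/-- The grid point `y_β = h β ∈ ℝ^d` for `β ∈ ℤ^d`. -/
noncomputable def ygrid (d : ℕ) (h : ℝ) (β : Fin d → ℤ) : EuclideanSpace ℝ (Fin d) :=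
  (WithLp.equiv 2 (Fin d → ℝ)).symm (fun i => h * (β i : ℝ))

/-- The discrete `p`-Laplacian `D_p^h ψ(x) = Σ_β J_p(ψ(x+y_β) - ψ(x)) ω_β`. -/
noncomputable def Dph (d : ℕ) (p h : ℝ) (ω : (Fin d → ℤ) → ℝ)
    (ψ : EuclideanSpace ℝ (Fin d) → ℝ) (x : EuclideanSpace ℝ (Fin d)) : ℝ :=
  ∑ᶠ β, Jp p (ψ (x + ygrid d h β) - ψ x) * ω β

lemma Jp_neg (p ξ : ℝ) : Jp p (-ξ) = -Jp p ξ := by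
  simp only [Jp, abs_neg, mul_neg]

lemma Jp_eq_rpow_of_pos {p ξ : ℝ} (hξ : 0 < ξ) : Jp p ξ = ξ ^ (p - 1) := by
  rw [Jp, abs_of_pos hξ, ← Real.rpow_add_one hξ.ne']
  ring_nf

lemma hasDerivAt_Jp_of_pos {p x : ℝ} (hx : 0 < x) :
    HasDerivAt (Jp p) ((p - 1) * |x| ^ (p - 2)) x := by
  have h := Real.hasDerivAt_rpow_const (p := p - 1) (Or.inl hx.ne')
  rw [show p - 1 - 1 = p - 2 by ring] at h
  rw [abs_of_pos hx]
  exact h.congr_of_eventuallyEq <| (eventually_gt_nhds hx).mono fun ξ hξ => Jp_eq_rpow_of_pos hξ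

lemma hasDerivAt_Jp_zero {p : ℝ} (hp : 2 ≤ p) :
    HasDerivAt (Jp p) ((p - 1) * |0| ^ (p - 2)) 0 := by
  have hcoeff : (p - 1) * |(0 : ℝ)| ^ (p - 2) = |(0 : ℝ)| ^ (p - 2) := by
    rcases hp.eq_or_lt with rfl | hp
    · norm_num
    · rw [abs_zero, Real.zero_rpow (by linarith), mul_zero]
  rw [hcoeff, hasDerivAt_iff_tendsto_slope]
  have hcont : ContinuousAt (fun ξ : ℝ => |ξ| ^ (p - 2)) 0 :=
    (Real.continuousAt_rpow_const _ _ (Or.inr (by linarith))).comp continuous_abs.continuousAt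
  refine hcont.tendsto.mono_left nhdsWithin_le_nhds |>.congr' ?_
  filter_upwards [self_mem_nhdsWithin] with ξ (hξ : ξ ≠ 0)
  rw [slope_def_field, Jp, Jp, mul_zero, sub_zero, sub_zero, mul_div_cancel_right₀ _ hξ]

lemma hasDerivAt_Jp {p : ℝ} (hp : 2 ≤ p) (x : ℝ) :
    HasDerivAt (Jp p) ((p - 1) * |x| ^ (p - 2)) x := by
  rcases lt_trichotomy x 0 with hx | rfl | hx
  · have h := ((hasDerivAt_Jp_of_pos (p := p) (neg_pos.2 hx)).comp x (hasDerivAt_neg x)).neg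
    rw [abs_neg, mul_neg_one, neg_neg] at h
    exact h.congr_of_eventuallyEq (.of_forall fun ξ => by simp [Jp_neg])
  · exact hasDerivAt_Jp_zero hp
  · exact hasDerivAt_Jp_of_pos hx

lemma monotone_Jp {p : ℝ} (hp : 2 ≤ p) : Monotone (Jp p) :=
  monotone_of_hasDerivAt_nonneg (hasDerivAt_Jp hp) fun x =>
    mul_nonneg (by linarith) (Real.rpow_nonneg (abs_nonneg x) _)

lemma slope_Jp_nonneg {p : ℝ} (hp : 2 ≤ p) (a b : ℝ) : 0 ≤ slope (Jp p) a b :=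
  (monotone_Jp hp).monotoneOn Set.univ |>.slope_nonneg trivial trivial

lemma slope_Jp_le {p a b C : ℝ} (hp : 2 ≤ p) (ha : |a| ≤ C) (hb : |b| ≤ C) :
    slope (Jp p) a b ≤ (p - 1) * C ^ (p - 2) := by
  have hderiv : ∀ ξ ∈ Set.uIcc a b, ‖(p - 1) * |ξ| ^ (p - 2)‖ ≤ (p - 1) * C ^ (p - 2) := by
    intro ξ hξ
    have hξC : |ξ| ≤ C := abs_le.2 <|
      Set.uIcc_subset_Icc (abs_le.1 ha) (abs_le.1 hb) hξ
    rw [Real.norm_of_nonneg (mul_nonneg (by linarith) (by positivity))]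
    gcongr
    linarith
  have hlip := (convex_uIcc a b).norm_image_sub_le_of_norm_hasDerivWithin_le
    (fun ξ _ => (hasDerivAt_Jp hp ξ).hasDerivWithinAt) hderiv Set.left_mem_uIcc Set.right_mem_uIcc
  rw [slope_def_field]
  rcases eq_or_ne b a with rfl | hne
  · simp only [sub_self, div_zero]
    exact mul_nonneg (by linarith) (Real.rpow_nonneg ((abs_nonneg _).trans hb) _)
  · rw [Real.norm_eq_abs, Real.norm_eq_abs] at hlip
    exact (le_abs_self _).trans <| by
      rw [abs_div, div_le_iff₀ (abs_pos.2 (sub_ne_zero.2 hne))]; exact hlip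

lemma abs_add_mul_sum_sub_le {ι : Type*} (s : Finset ι) {w e : ι → ℝ} {e₀ τ B : ℝ}
    (hτ : 0 ≤ τ) (hw : ∀ i ∈ s, 0 ≤ w i) (hτw : τ * ∑ i ∈ s, w i ≤ 1)
    (he₀ : |e₀| ≤ B) (he : ∀ i ∈ s, |e i| ≤ B) :
    |e₀ + τ * ∑ i ∈ s, w i * (e i - e₀)| ≤ B := by
  have hconv : e₀ + τ * ∑ i ∈ s, w i * (e i - e₀) =
      (1 - τ * ∑ i ∈ s, w i) * e₀ + τ * ∑ i ∈ s, w i * e i := by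
    simp only [mul_sub, Finset.sum_sub_distrib, ← Finset.sum_mul]
    ring
  calc |e₀ + τ * ∑ i ∈ s, w i * (e i - e₀)|
      ≤ (1 - τ * ∑ i ∈ s, w i) * |e₀| + τ * ∑ i ∈ s, w i * |e i| := by
        rw [hconv]
        refine (abs_add_le _ _).trans (add_le_add ?_ ?_)
        · rw [abs_mul, abs_of_nonneg (sub_nonneg.2 hτw)]
        · rw [abs_mul, abs_of_nonneg hτ]
          refine mul_le_mul_of_nonneg_left ((Finset.abs_sum_le_sum_abs _ _).trans ?_) hτ
          exact Finset.sum_le_sum fun i hi => by rw [abs_mul, abs_of_nonneg (hw i hi)]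
    _ ≤ (1 - τ * ∑ i ∈ s, w i) * B + τ * ∑ i ∈ s, w i * B := by
        gcongr with i hi
        · exact hw i hi
        · exact he i hi
    _ = B := by rw [← Finset.sum_mul]; ring

lemma holder_const_nonneg {E : Type*} [NormedAddCommGroup E] [Nontrivial E] {v : E → ℝ}
    {L a : ℝ} (hv : ∀ x y, |v x - v y| ≤ L * ‖x - y‖ ^ a) : 0 ≤ L := by
  obtain ⟨x, hx⟩ := exists_ne (0 : E)
  have h := (abs_nonneg _).trans (hv x 0)
  rw [sub_zero] at h
  exact nonneg_of_mul_nonneg_left h (Real.rpow_pos_of_pos (norm_pos_iff.2 hx) a)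

lemma abs_sub_le_iSup_abs_sub {α : Type*} {u v : α → ℝ}
    (hu : BddAbove (Set.range fun x => |u x|)) (hv : BddAbove (Set.range fun x => |v x|)) (x : α) :
    |u x - v x| ≤ ⨆ x, |u x - v x| := by
  obtain ⟨bu, hbu⟩ := hu
  obtain ⟨bv, hbv⟩ := hv
  refine le_ciSup (f := fun x => |u x - v x|) ⟨bu + bv, ?_⟩ x
  rintro _ ⟨y, rfl⟩
  exact (abs_sub _ _).trans (add_le_add (hbu ⟨y, rfl⟩) (hbv ⟨y, rfl⟩))

lemma step_cfl_of_cfl {p r a τ M L S : ℝ} (hp : 1 ≤ p) (hr : 0 < r) (hτ : 0 ≤ τ) (hL : 0 ≤ L)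
    (hS : S ≤ M * r ^ (-p))
    (hCFL : τ * (p - 1) * M * L ^ (p - 2) ≤ r ^ (2 + (1 - a) * (p - 2))) :
    τ * ((p - 1) * (L * r ^ a) ^ (p - 2)) * S ≤ 1 := by
  have hr_pow : r ^ (2 + (1 - a) * (p - 2)) * r ^ (a * (p - 2)) * r ^ (-p) = 1 := by
    rw [← Real.rpow_add hr, ← Real.rpow_add hr]
    convert Real.rpow_zero r using 2
    ring
  calc τ * ((p - 1) * (L * r ^ a) ^ (p - 2)) * S
      = τ * (p - 1) * L ^ (p - 2) * r ^ (a * (p - 2)) * S := by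
        rw [Real.mul_rpow hL (by positivity), ← Real.rpow_mul hr.le]
        ring
    _ ≤ τ * (p - 1) * L ^ (p - 2) * r ^ (a * (p - 2)) * (M * r ^ (-p)) := by
        have : 0 ≤ p - 1 := by linarith
        gcongr
    _ = τ * (p - 1) * M * L ^ (p - 2) * r ^ (a * (p - 2)) * r ^ (-p) := by ring
    _ ≤ r ^ (2 + (1 - a) * (p - 2)) * r ^ (a * (p - 2)) * r ^ (-p) := by gcongr
    _ = 1 := hr_pow

lemma finite_support_of_norm_ygrid {d : ℕ} {h r : ℝ} (hh : 0 < h) {ω : (Fin d → ℤ) → ℝ}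
    (hzero : ∀ β, r ≤ ‖ygrid d h β‖ → ω β = 0) : ω.support.Finite := by
  refine (Set.Finite.pi fun _ => Set.finite_Icc (-⌊r / h⌋) ⌊r / h⌋).subset ?_
  intro β hβ i _
  have hβr : |h * β i| ≤ r :=
    (PiLp.norm_apply_le (ygrid d h β) i).trans (not_le.1 (mt (hzero β) hβ)).le
  rw [abs_mul, abs_of_pos hh, ← le_div_iff₀' hh] at hβr
  exact abs_le.1 (Int.le_floor.2 (by exact_mod_cast hβr))

noncomputable def explicitStep (d : ℕ) (p h : ℝ) (ω : (Fin d → ℤ) → ℝ) (τ : ℝ)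
    (g ψ : EuclideanSpace ℝ (Fin d) → ℝ) (x : EuclideanSpace ℝ (Fin d)) : ℝ :=
  ψ x + τ * (Dph d p h ω ψ x + g x)

section

variable {d : ℕ} {p h : ℝ} {ω : (Fin d → ℤ) → ℝ}

lemma Dph_eq_sum (hfin : ω.support.Finite) (ψ : EuclideanSpace ℝ (Fin d) → ℝ)
    (x : EuclideanSpace ℝ (Fin d)) :
    Dph d p h ω ψ x = ∑ β ∈ hfin.toFinset, Jp p (ψ (x + ygrid d h β) - ψ x) * ω β :=
  finsum_eq_finsetSum_of_support_subset _ fun β hβ => by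
    simpa using right_ne_zero_of_mul hβ

lemma Dph_comp_add_right (ψ : EuclideanSpace ℝ (Fin d) → ℝ)
    (x z : EuclideanSpace ℝ (Fin d)) :
    Dph d p h ω (fun w => ψ (w + z)) x = Dph d p h ω ψ (x + z) := by
  simp only [Dph, add_right_comm x z]

lemma explicitStep_comp_add_right (τ : ℝ) (g ψ : EuclideanSpace ℝ (Fin d) → ℝ)
    (x z : EuclideanSpace ℝ (Fin d)) :
    explicitStep d p h ω τ (fun w => g (w + z)) (fun w => ψ (w + z)) x =
      explicitStep d p h ω τ g ψ (x + z) := by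
  simp only [explicitStep, Dph_comp_add_right]

lemma abs_explicitStep_sub_le (hp : 2 ≤ p) (hnn : ∀ β, 0 ≤ ω β) (hfin : ω.support.Finite)
    {τ K B : ℝ} (hτ : 0 ≤ τ) {g g' ψ ψ' : EuclideanSpace ℝ (Fin d) → ℝ}
    (hψ : ∀ x β, ω β ≠ 0 → |ψ (x + ygrid d h β) - ψ x| ≤ K)
    (hψ' : ∀ x β, ω β ≠ 0 → |ψ' (x + ygrid d h β) - ψ' x| ≤ K)
    (hCFL : τ * ((p - 1) * K ^ (p - 2)) * ∑ᶠ β, ω β ≤ 1)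
    (hB : ∀ x, |ψ x - ψ' x| ≤ B) (x : EuclideanSpace ℝ (Fin d)) :
    |explicitStep d p h ω τ g ψ x - explicitStep d p h ω τ g' ψ' x| ≤ B + τ * |g x - g' x| := by
  set s := hfin.toFinset
  set y := ygrid d h
  set w : (Fin d → ℤ) → ℝ := fun β =>
    ω β * slope (Jp p) (ψ' (x + y β) - ψ' x) (ψ (x + y β) - ψ x)
  have hDiff : Dph d p h ω ψ x - Dph d p h ω ψ' x =
      ∑ β ∈ s, w β * ((ψ (x + y β) - ψ' (x + y β)) - (ψ x - ψ' x)) := by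
    rw [Dph_eq_sum hfin, Dph_eq_sum hfin, ← Finset.sum_sub_distrib]
    refine Finset.sum_congr rfl fun β _ => ?_
    have hslope := sub_smul_slope (Jp p) (ψ' (x + y β) - ψ' x) (ψ (x + y β) - ψ x)
    rw [smul_eq_mul, vsub_eq_sub] at hslope
    rw [← sub_mul, ← hslope]
    ring
  have hw : ∀ β ∈ s, 0 ≤ w β := fun β _ => mul_nonneg (hnn β) (slope_Jp_nonneg hp _ _)
  have hτw : τ * ∑ β ∈ s, w β ≤ 1 :=
    calc τ * ∑ β ∈ s, w β ≤ τ * ∑ β ∈ s, ω β * ((p - 1) * K ^ (p - 2)) := by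
          gcongr with β hβ
          have hωβ : ω β ≠ 0 := (Set.Finite.mem_toFinset hfin).1 hβ
          exact mul_le_mul_of_nonneg_left (slope_Jp_le hp (hψ' x β hωβ) (hψ x β hωβ)) (hnn β)
      _ = τ * ((p - 1) * K ^ (p - 2)) * ∑ᶠ β, ω β := by
          rw [finsum_eq_sum ω hfin, ← Finset.sum_mul]; ring
      _ ≤ 1 := hCFL
  have hconv := abs_add_mul_sum_sub_le s hτ hw hτw (hB x) fun β _ => hB (x + y β)
  calc |explicitStep d p h ω τ g ψ x - explicitStep d p h ω τ g' ψ' x|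
      = |(ψ x - ψ' x + τ * ∑ β ∈ s, w β * ((ψ (x + y β) - ψ' (x + y β)) - (ψ x - ψ' x)))
          + τ * (g x - g' x)| := by
        rw [explicitStep, explicitStep, ← hDiff]
        ring_nf
    _ ≤ B + τ * |g x - g' x| := by
        refine (abs_add_le _ _).trans (add_le_add hconv ?_)
        rw [abs_mul, abs_of_nonneg hτ]

lemma abs_add_ygrid_sub_le {r a C L : ℝ} (hzero : ∀ β, r ≤ ‖ygrid d h β‖ → ω β = 0)
    (ha : 0 ≤ a) (hL : 0 ≤ L) (hCL : C ≤ L) {ψ : EuclideanSpace ℝ (Fin d) → ℝ}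
    (hψ : ∀ x y, |ψ x - ψ y| ≤ C * ‖x - y‖ ^ a) (x : EuclideanSpace ℝ (Fin d))
    (β : Fin d → ℤ) (hβ : ω β ≠ 0) :
    |ψ (x + ygrid d h β) - ψ x| ≤ L * r ^ a := by
  have hβr : ‖ygrid d h β‖ ≤ r := (not_le.1 (mt (hzero β) hβ)).le
  calc |ψ (x + ygrid d h β) - ψ x| ≤ C * ‖ygrid d h β‖ ^ a := by
        simpa using hψ (x + ygrid d h β) x
    _ ≤ L * r ^ a := by gcongr

lemma holder_explicitScheme (hp : 2 ≤ p) (hnn : ∀ β, 0 ≤ ω β) (hfin : ω.support.Finite)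
    {r τ a Lu Lf L : ℝ} {N : ℕ} (hzero : ∀ β, r ≤ ‖ygrid d h β‖ → ω β = 0) (hτ : 0 ≤ τ)
    (ha : 0 ≤ a) (hL : 0 ≤ L) (hLj : ∀ j ≤ N, Lu + j * τ * Lf ≤ L)
    (hCFL : τ * ((p - 1) * (L * r ^ a) ^ (p - 2)) * ∑ᶠ β, ω β ≤ 1)
    {u₀ f : EuclideanSpace ℝ (Fin d) → ℝ} (hu₀ : ∀ x y, |u₀ x - u₀ y| ≤ Lu * ‖x - y‖ ^ a)
    (hf : ∀ x y, |f x - f y| ≤ Lf * ‖x - y‖ ^ a) {U : ℕ → EuclideanSpace ℝ (Fin d) → ℝ}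
    (hU0 : ∀ x, U 0 x = u₀ x) (hUrec : ∀ j x, U (j + 1) x = explicitStep d p h ω τ f (U j) x) :
    ∀ j ≤ N, ∀ x y, |U j x - U j y| ≤ (Lu + j * τ * Lf) * ‖x - y‖ ^ a := by
  intro j
  induction j with
  | zero => intro _ x y; simpa [hU0] using hu₀ x y
  | succ j ih =>
    intro hj x y
    have hHol := ih (by omega)
    have hK := abs_add_ygrid_sub_le hzero ha hL (hLj j (by omega)) hHol
    -- `U j (· + (x - y))` is the scheme for the data translated by `x - y`
    have hstep := abs_explicitStep_sub_le (g := fun w => f (w + (x - y))) (g' := f)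
      (ψ := fun w => U j (w + (x - y))) hp hnn hfin hτ
      (fun w β hβ => by simpa only [add_right_comm w] using hK (w + (x - y)) β hβ) hK hCFL
      (fun w => by simpa using hHol (w + (x - y)) w) y
    rw [explicitStep_comp_add_right, add_sub_cancel, ← hUrec, ← hUrec] at hstep
    calc |U (j + 1) x - U (j + 1) y|
        ≤ (Lu + j * τ * Lf) * ‖x - y‖ ^ a + τ * |f x - f y| := hstep
      _ ≤ (Lu + j * τ * Lf) * ‖x - y‖ ^ a + τ * (Lf * ‖x - y‖ ^ a) := by gcongr; exact hf x y
      _ = (Lu + ↑(j + 1) * τ * Lf) * ‖x - y‖ ^ a := by push_cast; ring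

lemma abs_explicitScheme_sub_le (hp : 2 ≤ p) (hnn : ∀ β, 0 ≤ ω β) (hfin : ω.support.Finite)
    {τ K B₀ Bf : ℝ} {N : ℕ} (hτ : 0 ≤ τ) (hCFL : τ * ((p - 1) * K ^ (p - 2)) * ∑ᶠ β, ω β ≤ 1)
    {f f' : EuclideanSpace ℝ (Fin d) → ℝ} {U U' : ℕ → EuclideanSpace ℝ (Fin d) → ℝ}
    (hU : ∀ j < N, ∀ x β, ω β ≠ 0 → |U j (x + ygrid d h β) - U j x| ≤ K)
    (hU' : ∀ j < N, ∀ x β, ω β ≠ 0 → |U' j (x + ygrid d h β) - U' j x| ≤ K)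
    (hU0 : ∀ x, |U 0 x - U' 0 x| ≤ B₀) (hf : ∀ x, |f x - f' x| ≤ Bf)
    (hUrec : ∀ j x, U (j + 1) x = explicitStep d p h ω τ f (U j) x)
    (hUrec' : ∀ j x, U' (j + 1) x = explicitStep d p h ω τ f' (U' j) x) :
    ∀ j ≤ N, ∀ x, |U j x - U' j x| ≤ B₀ + j * τ * Bf := by
  intro j
  induction j with
  | zero => intro _ x; simpa using hU0 x
  | succ j ih =>
    intro hj x
    have hstep := abs_explicitStep_sub_le (g := f) (g' := f') hp hnn hfin hτ (hU j hj) (hU' j hj)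
      hCFL (ih (by omega)) x
    rw [← hUrec, ← hUrec'] at hstep
    calc |U (j + 1) x - U' (j + 1) x| ≤ B₀ + j * τ * Bf + τ * |f x - f' x| := hstep
      _ ≤ B₀ + j * τ * Bf + τ * Bf := by gcongr; exact hf x
      _ = B₀ + ↑(j + 1) * τ * Bf := by push_cast; ring

end

theorem scheme_continuous_dependence_general (d : ℕ) (hd : 1 ≤ d) (p : ℝ) (hp : 2 ≤ p)
    (h r τ : ℝ) (hh : 0 < h) (hr : 0 < r) (hτ : 0 < τ) (N : ℕ) (M : ℝ)
    (ω : (Fin d → ℤ) → ℝ) (hnn : ∀ β, 0 ≤ ω β)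
    (hzero : ∀ β, r ≤ ‖ygrid d h β‖ → ω β = 0)
    (hsum : ∑ᶠ β, ω β ≤ M * r ^ (-p))
    (a Lu Lf Lu' Lf' : ℝ) (ha0 : 0 < a)
    (u₀ f u₀' f' : EuclideanSpace ℝ (Fin d) → ℝ)
    (hu₀b : BddAbove (Set.range fun x => |u₀ x|))
    (hfb : BddAbove (Set.range fun x => |f x|))
    (hu₀b' : BddAbove (Set.range fun x => |u₀' x|))
    (hfb' : BddAbove (Set.range fun x => |f' x|))
    (hu₀ : ∀ x y, |u₀ x - u₀ y| ≤ Lu * ‖x - y‖ ^ a)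
    (hf : ∀ x y, |f x - f y| ≤ Lf * ‖x - y‖ ^ a)
    (hu₀' : ∀ x y, |u₀' x - u₀' y| ≤ Lu' * ‖x - y‖ ^ a)
    (hf' : ∀ x y, |f' x - f' y| ≤ Lf' * ‖x - y‖ ^ a)
    (U U' : ℕ → EuclideanSpace ℝ (Fin d) → ℝ)
    (hU0 : ∀ x, U 0 x = u₀ x)
    (hUrec : ∀ j x, U (j + 1) x = U j x + τ * (Dph d p h ω (U j) x + f x))
    (hU0' : ∀ x, U' 0 x = u₀' x)
    (hUrec' : ∀ j x, U' (j + 1) x = U' j x + τ * (Dph d p h ω (U' j) x + f' x))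
    (hCFL : τ * (p - 1) * M * (max Lu Lu' + (N : ℝ) * τ * max Lf Lf') ^ (p - 2) ≤
      r ^ (2 + (1 - a) * (p - 2))) :
    ∀ j ≤ N, ∀ x,
      |U j x - U' j x| ≤ (⨆ x, |u₀ x - u₀' x|) + (j : ℝ) * τ * ⨆ x, |f x - f' x| := by
  have : Nonempty (Fin d) := ⟨⟨0, hd⟩⟩
  have hfin := finite_support_of_norm_ygrid hh hzero
  have hLu : 0 ≤ Lu := holder_const_nonneg hu₀
  have hLu' : 0 ≤ Lu' := holder_const_nonneg hu₀'
  have hLf : 0 ≤ Lf := holder_const_nonneg hf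
  have hLf' : 0 ≤ Lf' := holder_const_nonneg hf'
  set L := max Lu Lu' + (N : ℝ) * τ * max Lf Lf' with hLdef
  have hL : 0 ≤ L := by positivity
  have hLj : ∀ j ≤ N, Lu + j * τ * Lf ≤ L ∧ Lu' + j * τ * Lf' ≤ L := fun j hj =>
    ⟨by rw [hLdef]; gcongr; exacts [le_max_left _ _, le_max_left _ _],
     by rw [hLdef]; gcongr; exacts [le_max_right _ _, le_max_right _ _]⟩
  have hstepCFL := step_cfl_of_cfl (by linarith) hr hτ.le hL hsum hCFL
  have hHol := holder_explicitScheme hp hnn hfin hzero hτ.le ha0.le hL (fun j hj => (hLj j hj).1)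
    hstepCFL hu₀ hf hU0 hUrec
  have hHol' := holder_explicitScheme hp hnn hfin hzero hτ.le ha0.le hL (fun j hj => (hLj j hj).2)
    hstepCFL hu₀' hf' hU0' hUrec'
  exact abs_explicitScheme_sub_le hp hnn hfin hτ.le hstepCFL
    (fun j hj => abs_add_ygrid_sub_le hzero ha0.le hL (hLj j hj.le).1 (hHol j hj.le))
    (fun j hj => abs_add_ygrid_sub_le hzero ha0.le hL (hLj j hj.le).2 (hHol' j hj.le))
    (fun x => by simpa only [hU0, hU0'] using abs_sub_le_iSup_abs_sub hu₀b hu₀b' x)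
    (abs_sub_le_iSup_abs_sub hfb hfb') hUrec hUrec'

/-- Continuous dependence on the data (Proposition 3.5). -/
theorem scheme_continuous_dependence (d : ℕ) (hd : 1 ≤ d) (p : ℝ) (hp : 2 ≤ p)
    (h r τ : ℝ) (hh : 0 < h) (hr : 0 < r) (hτ : 0 < τ) (N : ℕ) (M : ℝ) (hM : 0 < M)
    (ω : (Fin d → ℤ) → ℝ) (hsym : ∀ β, ω (-β) = ω β) (hnn : ∀ β, 0 ≤ ω β)
    (hzero : ∀ β, r ≤ ‖ygrid d h β‖ → ω β = 0)
    (hsum : ∑ᶠ β, ω β ≤ M * r ^ (-p))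
    (a Lu Lf Lu' Lf' : ℝ) (ha0 : 0 < a) (ha1 : a ≤ 1)
    (u₀ f u₀' f' : EuclideanSpace ℝ (Fin d) → ℝ)
    (hu₀b : BddAbove (Set.range fun x => |u₀ x|))
    (hfb : BddAbove (Set.range fun x => |f x|))
    (hu₀b' : BddAbove (Set.range fun x => |u₀' x|))
    (hfb' : BddAbove (Set.range fun x => |f' x|))
    (hu₀ : ∀ x y, |u₀ x - u₀ y| ≤ Lu * ‖x - y‖ ^ a)
    (hf : ∀ x y, |f x - f y| ≤ Lf * ‖x - y‖ ^ a)
    (hu₀' : ∀ x y, |u₀' x - u₀' y| ≤ Lu' * ‖x - y‖ ^ a)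
    (hf' : ∀ x y, |f' x - f' y| ≤ Lf' * ‖x - y‖ ^ a)
    (U U' : ℕ → EuclideanSpace ℝ (Fin d) → ℝ)
    (hU0 : ∀ x, U 0 x = u₀ x)
    (hUrec : ∀ j x, U (j + 1) x = U j x + τ * (Dph d p h ω (U j) x + f x))
    (hU0' : ∀ x, U' 0 x = u₀' x)
    (hUrec' : ∀ j x, U' (j + 1) x = U' j x + τ * (Dph d p h ω (U' j) x + f' x))
    (hCFL : τ * (p - 1) * M * (max Lu Lu' + (N : ℝ) * τ * max Lf Lf') ^ (p - 2) ≤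
      r ^ (2 + (1 - a) * (p - 2))) :
    ∀ j ≤ N, ∀ x,
      |U j x - U' j x| ≤ (⨆ x, |u₀ x - u₀' x|) + (j : ℝ) * τ * ⨆ x, |f x - f' x| :=
  scheme_continuous_dependence_general d hd p hp h r τ hh hr hτ N M ω hnn hzero hsum a Lu Lf Lu' Lf'
    ha0 u₀ f u₀' f' hu₀b hfb hu₀b' hfb' hu₀ hf hu₀' hf' U U' hU0 hUrec hU0' hUrec' hCFL
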